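/- For differentiable functions x₁,...,x_N with x₁ a root of multiplicity m₁+1 of p(z;t)=(z−x₁)^{m₁}∏_{n=1}^N(z−x_n), the following compatibility identity holds: Σ_{j=1}^N x₁^{N−j} ξ̇_j = Σ_{j=1}^N [(N−j+1)_{m₁}/(m₁+1)!] x₁^{N−j} ẏ_j, where ξ_j are the coefficients of ∏_{n=1}^N(z−x_n), y_j the first N coefficients of p, and (α)_m the Pochhammer symbol. -/

import Mathlib

/-!
Fix `t` and put `a = x₁(t)`, `Q_s = ∏ₙ (X - xₙ(s)) = (X - x₁(s)) R_s` and
`P_s = (X - x₁(s)) ^ m₁ Q_s = (X - x₁(s)) ^ (m₁ + 1) R_s`. Since `(N - j + 1)_{m₁}` is the falling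
factorial `(N - j + m₁)(N - j + m₁ - 1)⋯(N - j + 1)` that `m₁` derivatives produce from
`X ^ (N - j + m₁)`, the two weighted sums of coefficients are, up to constants, `Q_s(a)` and
`P_s^{(m₁)}(a) / (m₁ + 1)!`. By Leibniz, `P_s^{(m₁)}(a) = ∑ₖ cₖ (a - x₁(s)) ^ (k + 1) R_s^{(k)}(a)`;
as `a - x₁(t) = 0`, only the term `k = 0`, with `c₀ = (m₁ + 1)!`, survives differentiation at `t`,
exactly as for `Q_s(a) = (a - x₁(s)) R_s(a)`. Both sides therefore equal `-ẋ₁(t) R_t(a)`.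
-/

open Finset Polynomial

open scoped Nat

variable {𝕜 𝔸 : Type*} [NontriviallyNormedField 𝕜] [NormedCommRing 𝔸] [NormedAlgebra 𝕜 𝔸]

theorem HasDerivAt.mul_of_eq_zero {f g : 𝕜 → 𝔸} {f' : 𝔸} {t : 𝕜} (hf : HasDerivAt f f' t)
    (hf0 : f t = 0) (hg : DifferentiableAt 𝕜 g t) :
    HasDerivAt (fun s => f s * g s) (f' * g t) t := by
  simpa [hf0] using hf.fun_mul hg.hasDerivAt

namespace Polynomial

def CoeffsDifferentiableAt (p : 𝕜 → 𝔸[X]) (t : 𝕜) : Prop :=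
  ∀ n, DifferentiableAt 𝕜 (fun s => (p s).coeff n) t

namespace CoeffsDifferentiableAt

variable {p q : 𝕜 → 𝔸[X]} {t : 𝕜}

theorem X_sub_C {f : 𝕜 → 𝔸} (hf : DifferentiableAt 𝕜 f t) :
    CoeffsDifferentiableAt (fun s => X - C (f s)) t := by
  rintro (_ | _ | n) <;> simp [coeff_X, coeff_C, hf]

theorem mul (hp : CoeffsDifferentiableAt p t) (hq : CoeffsDifferentiableAt q t) :
    CoeffsDifferentiableAt (fun s => p s * q s) t := fun n => by
  simp only [coeff_mul]
  exact DifferentiableAt.fun_sum fun ij _ => (hp ij.1).mul (hq ij.2)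

theorem pow (hp : CoeffsDifferentiableAt p t) (k : ℕ) :
    CoeffsDifferentiableAt (fun s => p s ^ k) t := by
  induction k with
  | zero => intro n; simp only [pow_zero]; exact differentiableAt_const _
  | succ k ih => simpa only [pow_succ] using ih.mul hp

theorem prod {ι : Type*} (S : Finset ι) {p : ι → 𝕜 → 𝔸[X]}
    (hp : ∀ i ∈ S, CoeffsDifferentiableAt (p i) t) :
    CoeffsDifferentiableAt (fun s => ∏ i ∈ S, p i s) t := by
  classical
  induction S using Finset.induction_on with
  | empty => intro n; simp only [prod_empty]; exact differentiableAt_const _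
  | insert a S ha ih =>
    simp only [prod_insert ha]
    exact (hp a (mem_insert_self a S)).mul (ih fun i hi => hp i (mem_insert_of_mem hi))

theorem iterate_derivative (hp : CoeffsDifferentiableAt p t) (k : ℕ) :
    CoeffsDifferentiableAt (fun s => derivative^[k] (p s)) t := fun n => by
  simp only [coeff_iterate_derivative, nsmul_eq_mul]
  exact (hp (n + k)).const_mul _

theorem differentiableAt_eval (hp : CoeffsDifferentiableAt p t) {d : ℕ}
    (hd : ∀ s, (p s).natDegree ≤ d) (a : 𝔸) :
    DifferentiableAt 𝕜 (fun s => (p s).eval a) t := by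
  have hsum : (fun s => (p s).eval a) = fun s => ∑ i ∈ range (d + 1), (p s).coeff i * a ^ i :=
    _root_.funext fun s => eval_eq_sum_range' (Nat.lt_succ_of_le (hd s)) a
  rw [hsum]
  exact DifferentiableAt.fun_sum fun i _ => (hp i).mul_const _

end CoeffsDifferentiableAt

theorem sum_Icc_descFactorial_mul_pow_mul_coeff {R : Type*} [CommRing R] {p : R[X]}
    (hp : p.Monic) {N m : ℕ} (hdeg : p.natDegree = N + m) (a : R) :
    ∑ j ∈ Icc 1 N, ((N - j + m).descFactorial m : R) * a ^ (N - j) * p.coeff (N + m - j)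
      = (derivative^[m] p).eval a - ((N + m).descFactorial m : R) * a ^ N := by
  have hlt : (derivative^[m] p).natDegree < N + 1 := by
    have := natDegree_iterate_derivative p m
    omega
  have htop : p.coeff (N + m) = 1 := hdeg ▸ hp.coeff_natDegree
  rw [eval_eq_sum_range' hlt, sum_range_succ, coeff_iterate_derivative, htop,
    ← Ico_add_one_right_eq_Icc, range_eq_Ico,
    sum_congr rfl fun j hj => by rw [show N + m - j = N - j + m by simp at hj; omega],
    sum_Ico_reflect (fun k => ((k + m).descFactorial m : R) * a ^ k * p.coeff (k + m)) _ le_rfl]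
  simp only [coeff_iterate_derivative, nsmul_eq_mul, Nat.sub_self, mul_one, add_sub_cancel_right]
  exact sum_congr rfl fun k _ => by ring

end Polynomial

theorem ascPochhammer_eval_natCast_sub_add_one {R : Type*} [Ring R] {N j : ℕ} (hj : j ≤ N)
    (m : ℕ) :
    (ascPochhammer R m).eval ((N : R) - j + 1) = ((N - j + m).descFactorial m : R) := by
  have hcast : (N : R) - j + 1 = ((N - j + 1 : ℕ) : R) := by
    rw [Nat.cast_add, Nat.cast_sub hj, Nat.cast_one]
  rw [hcast, ← ascPochhammer_eval_cast, ascPochhammer_nat_eq_descFactorial, Nat.add_right_comm,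
    Nat.add_sub_cancel]

theorem hasDerivAt_eval_iterate_derivative_X_sub_C_pow_mul {u : 𝕜 → 𝔸} {u' : 𝔸} {t : 𝕜}
    (hu : HasDerivAt u u' t) {R : 𝕜 → 𝔸[X]} (hR : CoeffsDifferentiableAt R t) {d : ℕ}
    (hd : ∀ s, (R s).natDegree ≤ d) (m : ℕ) :
    HasDerivAt (fun s => (derivative^[m] ((X - C (u s)) ^ (m + 1) * R s)).eval (u t))
      ((m + 1)! * (-u' * (R t).eval (u t))) t := by
  set a := u t
  set c : ℕ → 𝔸 := fun k => (m.choose k : 𝔸) * ((m + 1).descFactorial (m - k) : 𝔸)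
  set h : ℕ → 𝕜 → 𝔸 := fun k s => (derivative^[k] (R s)).eval a
  have hLeibniz : ∀ s, (derivative^[m] ((X - C (u s)) ^ (m + 1) * R s)).eval a
      = ∑ k ∈ range (m + 1), c k * ((a - u s) * ((a - u s) ^ k * h k s)) := fun s => by
    rw [iterate_derivative_mul, eval_finsetSum]
    refine sum_congr rfl fun k hk => ?_
    rw [iterate_derivative_X_sub_pow, show m + 1 - (m - k) = k + 1 by simp at hk; omega]
    simp only [c, h, nsmul_eq_mul, eval_mul, eval_natCast, eval_pow, eval_sub, eval_X, eval_C]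
    ring
  have hh : ∀ k, DifferentiableAt 𝕜 (h k) t := fun k =>
    (hR.iterate_derivative k).differentiableAt_eval
      (fun s => (natDegree_iterate_derivative _ k).trans (tsub_le_self.trans (hd s))) a
  have hterm : ∀ k ∈ range (m + 1),
      HasDerivAt (fun s => c k * ((a - u s) * ((a - u s) ^ k * h k s)))
        (c k * (-u' * ((a - u t) ^ k * h k t))) t := fun k _ =>
    ((hu.const_sub a).mul_of_eq_zero (sub_self a)
      (((hu.const_sub a).differentiableAt.pow k).mul (hh k))).const_mul (c k)
  rw [_root_.funext hLeibniz]
  refine (HasDerivAt.fun_sum hterm).congr_deriv ?_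
  rw [sum_range_succ', sum_eq_zero fun k _ => by simp [a]]
  have hc : (m + 1).descFactorial m = (m + 1)! := by
    simpa using Nat.factorial_mul_descFactorial (Nat.le_succ m)
  simp [c, h, hc]

theorem sum_Icc_descFactorial_mul_pow_mul_deriv_coeff [Nontrivial 𝔸] {u : 𝕜 → 𝔸} {u' : 𝔸}
    {t : 𝕜} (hu : HasDerivAt u u' t) {R : 𝕜 → 𝔸[X]} (hR : CoeffsDifferentiableAt R t)
    (hR_monic : ∀ s, (R s).Monic) {N : ℕ} (hR_deg : ∀ s, (R s).natDegree + 1 = N) (m : ℕ) :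
    ∑ j ∈ Icc 1 N, ((N - j + m).descFactorial m : 𝔸) * u t ^ (N - j) *
        deriv (fun s => ((X - C (u s)) ^ (m + 1) * R s).coeff (N + m - j)) t
      = (m + 1)! * (-u' * (R t).eval (u t)) := by
  set P : 𝕜 → 𝔸[X] := fun s => (X - C (u s)) ^ (m + 1) * R s
  have hP : CoeffsDifferentiableAt P t :=
    ((CoeffsDifferentiableAt.X_sub_C hu.differentiableAt).pow _).mul hR
  have hP_deg : ∀ s, (P s).natDegree = N + m := fun s => by
    rw [((monic_X_sub_C _).pow _).natDegree_mul (hR_monic s),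
      (monic_X_sub_C _).natDegree_pow, natDegree_X_sub_C,
      ← hR_deg s]
    ring
  have hsum : ∀ s, ∑ j ∈ Icc 1 N, ((N - j + m).descFactorial m : 𝔸) * u t ^ (N - j) *
        (P s).coeff (N + m - j)
      = (derivative^[m] (P s)).eval (u t) - ((N + m).descFactorial m : 𝔸) * u t ^ N :=
    fun s => sum_Icc_descFactorial_mul_pow_mul_coeff
      (((monic_X_sub_C _).pow _).mul (hR_monic s)) (hP_deg s) (u t)
  have hderiv : HasDerivAt (fun s => ∑ j ∈ Icc 1 N, ((N - j + m).descFactorial m : 𝔸) *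
      u t ^ (N - j) * (P s).coeff (N + m - j)) ((m + 1)! * (-u' * (R t).eval (u t))) t := by
    rw [_root_.funext hsum]
    exact (hasDerivAt_eval_iterate_derivative_X_sub_C_pow_mul hu hR
      (fun s => (Nat.le_succ _).trans_eq (hR_deg s)) m).sub_const _
  exact (HasDerivAt.fun_sum fun j _ => (hP _).hasDerivAt.const_mul _).unique hderiv

theorem first_order_compatibility_identity
    (N m₁ : ℕ) (hN : 2 ≤ N)
    (x : Fin N → ℝ → ℂ)
    (hdiff : ∀ n, Differentiable ℝ (x n))
    (ξ y : ℕ → ℝ → ℂ)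
    (hξ : ∀ j t, ξ j t = (∏ i : Fin N, (X - C (x i t))).coeff (N - j))
    (hy : ∀ j t, y j t
      = ((X - C (x ⟨0, by omega⟩ t)) ^ m₁ * ∏ i : Fin N, (X - C (x i t))).coeff
          (N + m₁ - j)) :
    ∀ t,
      ∑ j ∈ Finset.Icc 1 N, (x ⟨0, by omega⟩ t) ^ (N - j) * deriv (ξ j) t
        = ∑ j ∈ Finset.Icc 1 N,
            ((ascPochhammer ℂ m₁).eval ((N : ℂ) - (j : ℂ) + 1) / ((m₁ + 1).factorial : ℂ)) *
              (x ⟨0, by omega⟩ t) ^ (N - j) * deriv (y j) t := by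
  intro t
  set i₀ : Fin N := ⟨0, by omega⟩
  set R : ℝ → ℂ[X] := fun s => ∏ i ∈ univ.erase i₀, (X - C (x i s))
  have hsplit : ∀ s, ∏ i, (X - C (x i s)) = (X - C (x i₀ s)) * R s :=
    fun s => (mul_prod_erase _ _ (mem_univ i₀)).symm
  have hR : CoeffsDifferentiableAt R t :=
    CoeffsDifferentiableAt.prod _ fun i _ => .X_sub_C (hdiff i t)
  have hR_monic : ∀ s, (R s).Monic := fun s => monic_prod_X_sub_C (x · s) _
  have hR_deg : ∀ s, (R s).natDegree + 1 = N := fun s => by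
    rw [natDegree_finsetProd_X_sub_C_eq_card, card_erase_of_mem (mem_univ _), card_univ,
      Fintype.card_fin]
    omega
  have hξ' : ∀ j, ξ j = fun s => ((X - C (x i₀ s)) ^ 1 * R s).coeff (N - j) :=
    fun j => _root_.funext fun s => by rw [hξ, hsplit, pow_one]
  have hy' : ∀ j, y j = fun s => ((X - C (x i₀ s)) ^ (m₁ + 1) * R s).coeff (N + m₁ - j) :=
    fun j => _root_.funext fun s => by rw [hy, hsplit, pow_succ, mul_assoc]
  have hx₀ := (hdiff i₀ t).hasDerivAt
  have hlhs := sum_Icc_descFactorial_mul_pow_mul_deriv_coeff hx₀ hR hR_monic hR_deg 0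
  have hrhs := sum_Icc_descFactorial_mul_pow_mul_deriv_coeff hx₀ hR hR_monic hR_deg m₁
  simp only [Nat.descFactorial_zero, Nat.cast_one, one_mul, zero_add, Nat.factorial_one,
    add_zero] at hlhs
  have hfact : ((m₁ + 1)! : ℂ) ≠ 0 := Nat.cast_ne_zero.2 (m₁ + 1).factorial_ne_zero
  simp only [hξ']
  rw [hlhs, ← mul_div_cancel_left₀ (-deriv (x i₀) t * (R t).eval (x i₀ t)) hfact, ← hrhs,
    sum_div]
  refine sum_congr rfl fun j hj => ?_
  rw [hy', ascPochhammer_eval_natCast_sub_add_one (mem_Icc.1 hj).2]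
  ring
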